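/- arXiv:hep-th/0008218 — 2 statements merged into one kernel-verified Lean document; each statement's English description precedes it below -/
import Mathlib

section
/- Let T be an invertible N×N matrix over a commutative ring P such that both Δ(T) = T ⊗ (T^{-1})ᵀ ⊗ T and Δ(T) = T ⊗ T ⊗ T hold (entrywise, with matrix composition in the middle slot), where Δ is injective on the subring generated by the entries of T. Then T ⊗ (T^{-1})ᵀ ⊗ T = T ⊗ T ⊗ T, and if P is an integral domain and T has a left-invertible column, it follows that (T^{-1})ᵀ = T, i.e., T is orthogonal: Tᵀ T = 1. -/
open scoped TensorProduct
open Matrix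

/-- The triple tensor product `P ⊗ P ⊗ P` over `ℤ`. -/
abbrev Triple (P : Type) [CommRing P] : Type := P ⊗[ℤ] (P ⊗[ℤ] P)

/-- Elementary triple tensor `a ⊗ b ⊗ c`. -/
noncomputable def tt {P : Type} [CommRing P] (a b c : P) : Triple P := a ⊗ₜ[ℤ] (b ⊗ₜ[ℤ] c)

/-- Let `T ∈ GL(N,P)` satisfy both `Δ(T) = T ⊗ (T⁻¹)ᵀ ⊗ T` and
`Δ(T) = T ⊗ T ⊗ T` (entrywise, with matrix composition in the middle slot), where `Δ` is
injective on the subring generated by the entries of `T`.  Then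
`T ⊗ (T⁻¹)ᵀ ⊗ T = T ⊗ T ⊗ T`, and, `P` being an integral domain and `T` having a
left-invertible column, `T` is orthogonal: `Tᵀ T = 1`. -/
theorem orthogonality_of_double_coproduct {P : Type} [CommRing P] [IsDomain P] {N : ℕ}
    (Δ : P →+* Triple P) (T : GL (Fin N) P)
    (hinj : ∀ x ∈ Subring.closure
        (Set.range fun p : Fin N × Fin N => (T : Matrix (Fin N) (Fin N) P) p.1 p.2),
      ∀ y ∈ Subring.closure
        (Set.range fun p : Fin N × Fin N => (T : Matrix (Fin N) (Fin N) P) p.1 p.2),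
      Δ x = Δ y → x = y)
    (h1 : ∀ i j, Δ ((T : Matrix (Fin N) (Fin N) P) i j) =
      ∑ k, ∑ l, tt ((T : Matrix (Fin N) (Fin N) P) i k)
        (((T⁻¹ : GL (Fin N) P) : Matrix (Fin N) (Fin N) P) l k)
        ((T : Matrix (Fin N) (Fin N) P) l j))
    (h2 : ∀ i j, Δ ((T : Matrix (Fin N) (Fin N) P) i j) =
      ∑ k, ∑ l, tt ((T : Matrix (Fin N) (Fin N) P) i k)
        ((T : Matrix (Fin N) (Fin N) P) k l)
        ((T : Matrix (Fin N) (Fin N) P) l j))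
    (hcol : ∃ j : Fin N, ∃ r : Fin N → P,
      ∑ i, r i * (T : Matrix (Fin N) (Fin N) P) i j = 1) :
    (∀ i j, (∑ k, ∑ l, tt ((T : Matrix (Fin N) (Fin N) P) i k)
        (((T⁻¹ : GL (Fin N) P) : Matrix (Fin N) (Fin N) P) l k)
        ((T : Matrix (Fin N) (Fin N) P) l j)) =
      ∑ k, ∑ l, tt ((T : Matrix (Fin N) (Fin N) P) i k)
        ((T : Matrix (Fin N) (Fin N) P) k l)
        ((T : Matrix (Fin N) (Fin N) P) l j)) ∧
    ((T : Matrix (Fin N) (Fin N) P))ᵀ * (T : Matrix (Fin N) (Fin N) P) = 1 := by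
  set M : Matrix (Fin N) (Fin N) P := (T : Matrix (Fin N) (Fin N) P) with hMdef
  set Mi : Matrix (Fin N) (Fin N) P := ((T⁻¹ : GL (Fin N) P) : Matrix (Fin N) (Fin N) P)
    with hMidef
  have key : ∀ i j, (∑ k, ∑ l, tt (M i k) (Mi l k) (M l j)) =
      ∑ k, ∑ l, tt (M i k) (M k l) (M l j) := fun i j => (h1 i j).symm.trans (h2 i j)
  refine ⟨key, ?_⟩
  have hMiM : Mi * M = 1 := T.inv_mul
  have hMMi : M * Mi = 1 := T.mul_inv
  let m : Triple P →ₗ[ℤ] P :=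
    (LinearMap.mul' ℤ P).comp (LinearMap.lTensor P (LinearMap.mul' ℤ P))
  have hm : ∀ a b c : P, m (tt a b c) = a * (b * c) := fun a b c => by
    show (LinearMap.mul' ℤ P) ((LinearMap.lTensor P (LinearMap.mul' ℤ P)) (a ⊗ₜ[ℤ] (b ⊗ₜ[ℤ] c))) = _
    simp [LinearMap.lTensor_tmul]
  have key2 : ∀ i j, (∑ k, ∑ l, M i k * (Mi l k * M l j)) =
      ∑ k, ∑ l, M i k * (M k l * M l j) := by
    intro i j
    have := congrArg m (key i j)
    simpa [map_sum, hm] using this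
  have hmat : M * Miᵀ * M = M * M * M := by
    ext i j
    have h := key2 i j
    simp only [Matrix.mul_apply, Matrix.transpose_apply, Finset.sum_mul, Finset.mul_sum,
      mul_assoc] at h ⊢
    exact Finset.sum_comm.trans (h.trans Finset.sum_comm)
  have hT : Miᵀ = M := by
    have h := congrArg (fun X => Mi * X * Mi) hmat
    simp only [Matrix.mul_assoc] at h
    simp only [hMMi, mul_one, ← Matrix.mul_assoc, hMiM, one_mul] at h
    exact h
  have hT' : Mᵀ = Mi := by
    have := congrArg Matrix.transpose hT
    simpa using this.symm
  rw [hT', hMiM]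
end

section
/- Let A ∈ GL(m, P) and B ∈ GL(n, P) both satisfy the framing condition Δ(M_{ij}) = Σ_{k,l} M_{ik} ⊗ (M^{-1})_{kl} ⊗ M_{lj}. Then the Kronecker (tensor) product A ⊗_Kron B ∈ GL(mn, P) also satisfies the framing condition. -/
open scoped TensorProduct Kronecker
open Matrix

/-- The framing condition `Δ(M_{ij}) = Σ_{k,l} M_{ik} ⊗ (M⁻¹)_{kl} ⊗ M_{lj}` for an
invertible matrix `M` with a given two-sided inverse `Minv`. -/
def IsFramedM {P : Type} [CommRing P] {ι : Type} [Fintype ι] [DecidableEq ι]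
    (Δ : P →+* Triple P) (M Minv : Matrix ι ι P) : Prop :=
  M * Minv = 1 ∧ Minv * M = 1 ∧
    ∀ i j, Δ (M i j) = ∑ k, ∑ l, tt (M i k) (Minv k l) (M l j)

lemma sum_mul_sum4 {R : Type} [NonUnitalNonAssocSemiring R] {ι κ : Type} [Fintype ι] [Fintype κ]
    (F : ι → ι → R) (G : κ → κ → R) :
    (∑ k, ∑ l, F k l) * (∑ k, ∑ l, G k l) =
      ∑ x : ι, ∑ x1 : κ, ∑ x2 : ι, ∑ x3 : κ, F x x2 * G x1 x3 := by
  rw [Fintype.sum_mul_sum]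
  exact Finset.sum_congr rfl fun k _ => Finset.sum_congr rfl fun k' _ =>
    Fintype.sum_mul_sum _ _

lemma tt_mul {P : Type} [CommRing P] (a b c a' b' c' : P) :
    tt a b c * tt a' b' c' = tt (a * a') (b * b') (c * c') := by
  simp [tt, Algebra.TensorProduct.tmul_mul_tmul]

/-- if `A ∈ GL(m,P)` and `B ∈ GL(n,P)` both satisfy the framing condition,
then the Kronecker product `A ⊗ₖ B ∈ GL(mn,P)` (with inverse `A⁻¹ ⊗ₖ B⁻¹`) also satisfies
the framing condition. -/
theorem kronecker_framed {P : Type} [CommRing P] {m n : ℕ} (Δ : P →+* Triple P)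
    (A : GL (Fin m) P) (B : GL (Fin n) P)
    (hA : IsFramedM Δ (A : Matrix (Fin m) (Fin m) P)
      ((A⁻¹ : GL (Fin m) P) : Matrix (Fin m) (Fin m) P))
    (hB : IsFramedM Δ (B : Matrix (Fin n) (Fin n) P)
      ((B⁻¹ : GL (Fin n) P) : Matrix (Fin n) (Fin n) P)) :
    IsFramedM Δ
      ((A : Matrix (Fin m) (Fin m) P) ⊗ₖ (B : Matrix (Fin n) (Fin n) P))
      (((A⁻¹ : GL (Fin m) P) : Matrix (Fin m) (Fin m) P) ⊗ₖ
        ((B⁻¹ : GL (Fin n) P) : Matrix (Fin n) (Fin n) P)) := by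
  obtain ⟨hA1, hA2, hA3⟩ := hA
  obtain ⟨hB1, hB2, hB3⟩ := hB
  refine ⟨?_, ?_, ?_⟩
  · rw [← Matrix.mul_kronecker_mul, hA1, hB1, Matrix.one_kronecker_one]
  · rw [← Matrix.mul_kronecker_mul, hA2, hB2, Matrix.one_kronecker_one]
  · rintro ⟨i, i'⟩ ⟨j, j'⟩
    simp only [Matrix.kroneckerMap_apply, _root_.map_mul, hA3 i j, hB3 i' j',
      Fintype.sum_prod_type]
    refine (sum_mul_sum4 (fun k l => tt ((A : Matrix (Fin m) (Fin m) P) i k)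
        (((A⁻¹ : GL (Fin m) P) : Matrix (Fin m) (Fin m) P) k l)
        ((A : Matrix (Fin m) (Fin m) P) l j))
      (fun k l => tt ((B : Matrix (Fin n) (Fin n) P) i' k)
        (((B⁻¹ : GL (Fin n) P) : Matrix (Fin n) (Fin n) P) k l)
        ((B : Matrix (Fin n) (Fin n) P) l j'))).trans ?_
    exact Finset.sum_congr rfl fun a _ => Finset.sum_congr rfl fun b _ =>
      Finset.sum_congr rfl fun c _ => Finset.sum_congr rfl fun d _ => tt_mul _ _ _ _ _ _
end
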